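/- Let (X, μ) be a σ-finite measure space, let (p_k)_{k∈ℕ} be real numbers with p_k > 1 for every k and ∑_{k∈ℕ} 1/p_k = 1, and let f_k ∈ L^{p_k}(X, μ) for each k. Suppose the partial products ∏_{k=0}^{n} ‖f_k‖_{L^{p_k}} converge, as n → ∞, to a limit in (0, +∞], and that the pointwise partial products ∏_{k=0}^{n} f_k converge μ-almost everywhere to a function f. Then ‖f‖_{L¹} ≤ ∏_{k=0}^{∞} ‖f_k‖_{L^{p_k}}; in particular, if the right-hand side is finite then f ∈ L¹(X, μ). -/

import Mathlib

/-!
By Hölder's inequality for finitely many factors, the partial product `∏_{k ≤ n} f_k` lies in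
`L^{r_n}` with `1/r_n = ∑_{k ≤ n} 1/p_k` and norm at most `∏_{k ≤ n} ‖f_k‖_{p_k}`. The exponents
`r_n` decrease to `1`, so `‖∏_{k ≤ n} f_k‖^{r_n}` tends pointwise a.e. to `|f|`, and Fatou's lemma
bounds `∫ |f|` by the limit of `(∏_{k ≤ n} ‖f_k‖_{p_k})^{r_n}`, which is the infinite product.
-/

open MeasureTheory Real Filter
open scoped ENNReal Topology

theorem Filter.Tendsto.ennrpow {α : Type*} {l : Filter α} {u : α → ℝ≥0∞} {v : α → ℝ}
    {x : ℝ≥0∞} {y : ℝ} (hu : Tendsto u l (𝓝 x)) (hx : x ≠ ⊤) (hv : Tendsto v l (𝓝 y))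
    (hy : 0 < y) : Tendsto (fun a => u a ^ v a) l (𝓝 (x ^ y)) := by
  have hnn : Tendsto (fun a => (((u a).toNNReal ^ v a : NNReal) : ℝ≥0∞)) l
      (𝓝 ((x.toNNReal ^ y : NNReal) : ℝ≥0∞)) :=
    ENNReal.continuous_coe.continuousAt.tendsto.comp
      (((ENNReal.tendsto_toNNReal hx).comp hu).nnrpow hv (Or.inr hy))
  rw [ENNReal.coe_rpow_of_nonneg _ hy.le, ENNReal.coe_toNNReal hx] at hnn
  refine hnn.congr' ?_
  filter_upwards [hu.eventually (gt_mem_nhds hx.lt_top), hv.eventually (lt_mem_nhds hy)]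
    with a hua hva
  rw [ENNReal.coe_rpow_of_nonneg _ hva.le, ENNReal.coe_toNNReal hua.ne]

theorem eLpNorm_prod_le {ι α 𝕜 : Type*} {_ : MeasurableSpace α} [NormedCommRing 𝕜]
    [NormOneClass 𝕜] {μ : Measure α} {f : ι → α → 𝕜} {p : ι → ℝ≥0∞} (s : Finset ι)
    (hf : ∀ i ∈ s, AEStronglyMeasurable (f i) μ) :
    eLpNorm (fun x => ∏ i ∈ s, f i x) (∑ i ∈ s, (p i)⁻¹)⁻¹ μ ≤
      ∏ i ∈ s, eLpNorm (f i) (p i) μ := by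
  induction s using Finset.cons_induction with
  | empty =>
    simp only [Finset.prod_empty, Finset.sum_empty, ENNReal.inv_zero, eLpNorm_exponent_top]
    exact eLpNormEssSup_le_of_ae_enorm_bound (.of_forall fun _ => by simp)
  | cons i s _ ih =>
    have hs : ∀ j ∈ s, AEStronglyMeasurable (f j) μ :=
      fun j hj => hf j (Finset.mem_cons_of_mem hj)
    simp only [Finset.prod_cons, Finset.sum_cons]
    calc _ ≤ 1 * eLpNorm (f i) (p i) μ *
          eLpNorm (fun x => ∏ j ∈ s, f j x) (∑ j ∈ s, (p j)⁻¹)⁻¹ μ :=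
          eLpNorm_le_eLpNorm_mul_eLpNorm_of_nnnorm (hf i (Finset.mem_cons_self i s))
            (Finset.aestronglyMeasurable_fun_prod s hs) (· * ·) 1
            (.of_forall fun _ => by simpa using nnnorm_mul_le _ _) (hpqr := ⟨by simp⟩)
      _ ≤ _ := by
          rw [one_mul]
          gcongr
          exact ih hs

theorem eLpNorm_le_of_tendsto_ae {α E ι : Type*} {_ : MeasurableSpace α} {μ : Measure α}
    [NormedAddCommGroup E] {l : Filter ι} [l.IsCountablyGenerated] [l.NeBot]
    {g : ι → α → E} {G : α → E} {r : ι → ℝ≥0∞} {r₀ : ℝ≥0∞} {c : ι → ℝ≥0∞} {c₀ : ℝ≥0∞}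
    (hg : ∀ i, AEStronglyMeasurable (g i) μ)
    (hgG : ∀ᵐ x ∂μ, Tendsto (fun i => g i x) l (𝓝 (G x)))
    (hr : Tendsto r l (𝓝 r₀)) (hr₀ : r₀ ≠ 0) (hr₀_top : r₀ ≠ ⊤)
    (hc : Tendsto c l (𝓝 c₀)) (hgc : ∀ i, eLpNorm (g i) (r i) μ ≤ c i) :
    eLpNorm G r₀ μ ≤ c₀ := by
  rcases eq_or_ne c₀ ⊤ with rfl | hc₀
  · exact le_top
  set t₀ := r₀.toReal
  have ht₀ : 0 < t₀ := ENNReal.toReal_pos hr₀ hr₀_top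
  have ht : Tendsto (fun i => (r i).toReal) l (𝓝 t₀) :=
    (ENNReal.tendsto_toReal hr₀_top).comp hr
  have hlintegral : ∀ᶠ i in l, ∫⁻ x, ‖g i x‖ₑ ^ (r i).toReal ∂μ ≤ c i ^ (r i).toReal := by
    filter_upwards [hr.eventually_ne hr₀, hr.eventually_ne hr₀_top,
      ht.eventually (lt_mem_nhds ht₀)] with i hi0 hitop hipos
    calc ∫⁻ x, ‖g i x‖ₑ ^ (r i).toReal ∂μ = eLpNorm (g i) (r i) μ ^ (r i).toReal := by
          rw [eLpNorm_eq_lintegral_rpow_enorm_toReal hi0 hitop, one_div,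
            ENNReal.rpow_inv_rpow hipos.ne']
      _ ≤ c i ^ (r i).toReal := ENNReal.rpow_le_rpow (hgc i) hipos.le
  have hpointwise : ∀ᵐ x ∂μ,
      Tendsto (fun i => ‖g i x‖ₑ ^ (r i).toReal) l (𝓝 (‖G x‖ₑ ^ t₀)) := by
    filter_upwards [hgG] with x hx
    exact (continuous_enorm.tendsto _ |>.comp hx).ennrpow enorm_ne_top ht ht₀
  have hfatou : ∫⁻ x, ‖G x‖ₑ ^ t₀ ∂μ ≤ c₀ ^ t₀ :=
    calc ∫⁻ x, ‖G x‖ₑ ^ t₀ ∂μ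
        = ∫⁻ x, liminf (fun i => ‖g i x‖ₑ ^ (r i).toReal) l ∂μ :=
          lintegral_congr_ae (by filter_upwards [hpointwise] with x hx using hx.liminf_eq.symm)
      _ ≤ liminf (fun i => ∫⁻ x, ‖g i x‖ₑ ^ (r i).toReal ∂μ) l :=
          lintegral_liminf_le' fun i => (hg i).enorm.pow_const _
      _ ≤ liminf (fun i => c i ^ (r i).toReal) l := liminf_le_liminf hlintegral
      _ = c₀ ^ t₀ := (hc.ennrpow hc₀ ht ht₀).liminf_eq
  rw [eLpNorm_eq_lintegral_rpow_enorm_toReal hr₀ hr₀_top, one_div]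
  calc (∫⁻ x, ‖G x‖ₑ ^ t₀ ∂μ) ^ t₀⁻¹ ≤ (c₀ ^ t₀) ^ t₀⁻¹ := by gcongr
    _ = c₀ := ENNReal.rpow_rpow_inv ht₀.ne' c₀

theorem tendsto_inv_sum_range_succ_inv_ofReal {p : ℕ → ℝ} (hp : ∀ k, 0 < p k) {s : ℝ}
    (hs : HasSum (fun k => 1 / p k) s) :
    Tendsto (fun n => (∑ k ∈ Finset.range (n + 1), (ENNReal.ofReal (p k))⁻¹)⁻¹) atTop
      (𝓝 (ENNReal.ofReal s)⁻¹) := by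
  have hterm : ∀ k, (ENNReal.ofReal (p k))⁻¹ = ENNReal.ofReal (1 / p k) := fun k => by
    rw [one_div, ENNReal.ofReal_inv_of_pos (hp k)]
  have htsum : ∑' k, (ENNReal.ofReal (p k))⁻¹ = ENNReal.ofReal s := by
    simp_rw [hterm]
    rw [← ENNReal.ofReal_tsum_of_nonneg (fun k => (one_div_pos.2 (hp k)).le) hs.summable,
      hs.tsum_eq]
  rw [← htsum]
  exact tendsto_inv_iff.2 ((ENNReal.tendsto_nat_tsum _).comp (tendsto_add_atTop_nat 1))

theorem stmt8 {X : Type*} [MeasurableSpace X] (μ : Measure X)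
    (p : ℕ → ℝ) (hp : ∀ k, 1 < p k) (hsum : ∑' k : ℕ, 1 / p k = 1)
    (f : ℕ → X → ℝ) (hf : ∀ k, MemLp (f k) (ENNReal.ofReal (p k)) μ)
    (L : ℝ≥0∞)
    (hprod : Tendsto
      (fun n => ∏ k ∈ Finset.range (n + 1), eLpNorm (f k) (ENNReal.ofReal (p k)) μ)
      atTop (nhds L))
    (F : X → ℝ)
    (hptw : ∀ᵐ x ∂μ, Tendsto (fun n => ∏ k ∈ Finset.range (n + 1), f k x)
      atTop (nhds (F x))) :
    eLpNorm F 1 μ ≤ L ∧ (L < ⊤ → Integrable F μ) := by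
  have hp₀ : ∀ k, 0 < p k := fun k => one_pos.trans (hp k)
  have hsummable : Summable fun k => 1 / p k := by
    by_contra h
    exact zero_ne_one ((tsum_eq_zero_of_not_summable h).symm.trans hsum)
  have hexp := tendsto_inv_sum_range_succ_inv_ofReal hp₀ (hsum ▸ hsummable.hasSum)
  rw [ENNReal.ofReal_one, inv_one] at hexp
  have hmeas : ∀ n, AEStronglyMeasurable (fun x => ∏ k ∈ Finset.range (n + 1), f k x) μ :=
    fun n => Finset.aestronglyMeasurable_fun_prod _ fun k _ => (hf k).aestronglyMeasurable
  have hF : eLpNorm F 1 μ ≤ L :=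
    eLpNorm_le_of_tendsto_ae hmeas hptw hexp one_ne_zero ENNReal.one_ne_top hprod
      fun n => eLpNorm_prod_le _ fun k _ => (hf k).aestronglyMeasurable
  refine ⟨hF, fun hL => memLp_one_iff_integrable.1 ⟨?_, hF.trans_lt hL⟩⟩
  exact aestronglyMeasurable_of_tendsto_ae atTop hmeas hptw
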